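/- Let G = (V,E) be a finite bi-directed graph, A ⊆ V, and let C be a nonempty connected set with spo(C) ∩ (A∖C) = ∅. Then the formal partial derivative of the polynomial p_A^V with respect to the variable q_C satisfies ∂p_A^V/∂q_C = (−1)^{|C∖A|} · p_{A∖C}^{V∖spo(C)}, where p_A^W denotes, for A ⊆ W ⊆ V, the polynomial p_A^W(q) = Σ_{B : A ⊆ B ⊆ W} (−1)^{|B∖A|} ∏_{C* ∈ [B]_G} q_{C*} in the variables (q_C : ∅ ≠ C ⊆ V connected in G). Moreover, if spo(C) ∩ (A∖C) ≠ ∅ then ∂p_A^V/∂q_C = 0. -/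

import Mathlib

/-!
Each monomial `∏_{D ∈ [B]} q_D` of `p_A^W` is linear in `q_C`, and it contains `q_C` exactly
when `C` is a component of `B`, i.e. when `C ⊆ B` and `B ∖ C` avoids `spo(C)`. For such `B`
the components of `B ∖ C` are the remaining components of `B`, and `B ↦ B ∖ C` is a bijection
onto the sets `B'` with `A ∖ C ⊆ B' ⊆ W ∖ spo(C)`; splitting off the sign `(−1)^{|C∖A|}` turns
the coefficient of `q_C` into `p_{A∖C}^{W∖spo(C)}`. If `spo(C)` meets `A ∖ C` there are no such
`B'`, and the derivative vanishes.
-/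

open Finset

namespace BMMI

variable {V : Type*} [Fintype V] [DecidableEq V]

/-- `Pr p A a` is the probability of the event `X_A = a|_A` under `p`. -/
def Pr (p : (V → Bool) → ℝ) (A : Finset V) (a : V → Bool) : ℝ :=
  ∑ i ∈ Finset.univ.filter (fun i : V → Bool => ∀ v ∈ A, i v = a v), p i

/-- `p` is a binary distribution on `V`. -/
def IsDist (p : (V → Bool) → ℝ) : Prop :=
  (∀ i, 0 ≤ p i) ∧ ∑ i : V → Bool, p i = 1

/-- `Pr2 p S T a b` is the probability of the joint event `X_S = a|_S, X_T = b|_T`. -/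
def Pr2 (p : (V → Bool) → ℝ) (S T : Finset V) (a b : V → Bool) : ℝ :=
  ∑ i ∈ Finset.univ.filter
      (fun i : V → Bool => (∀ v ∈ S, i v = a v) ∧ (∀ v ∈ T, i v = b v)), p i

/-- `X_S` and `X_T` are independent under `p`. -/
def Indep (p : (V → Bool) → ℝ) (S T : Finset V) : Prop :=
  ∀ a b : V → Bool, Pr2 p S T a b = Pr p S a * Pr p T b

/-- `spo G A` consists of `A` together with all vertices adjacent to a vertex of `A`. -/
def spo (G : SimpleGraph V) [DecidableRel G.Adj] (A : Finset V) : Finset V :=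
  Finset.univ.filter (fun w => w ∈ A ∨ ∃ v ∈ A, G.Adj v w)

/-- `C` is connected in `G`: every pair of vertices of `C` is joined by a walk
all of whose vertices lie in `C`. -/
def Conn (G : SimpleGraph V) (C : Finset V) : Prop :=
  ∀ v ∈ C, ∀ w ∈ C, ∃ W : G.Walk v w, ∀ x ∈ W.support, x ∈ C

/-- The connected set Markov property for the bi-directed graph `G`. -/
def CSMP (G : SimpleGraph V) [DecidableRel G.Adj] (p : (V → Bool) → ℝ) : Prop :=
  ∀ C : Finset V, C.Nonempty → Conn G C → Indep p C (Finset.univ \ spo G C)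

/-- `C` is an inclusion-maximal connected subset of `D` (a connected component of the
induced subgraph on `D`). -/
def IsMaxConnComp (G : SimpleGraph V) (D C : Finset V) : Prop :=
  C ⊆ D ∧ C.Nonempty ∧ Conn G C ∧
    ∀ C' : Finset V, C ⊆ C' → C' ⊆ D → Conn G C' → C' = C

/-- The Möbius parameter `q_A(p) = P(X_A = 0)`. -/
def qM (p : (V → Bool) → ℝ) (A : Finset V) : ℝ := Pr p A (fun _ => false)

open Classical in
/-- `[B]_G`: the finset of inclusion-maximal connected subsets of `B`. -/
noncomputable def maxConnComps (G : SimpleGraph V) (B : Finset V) :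
    Finset (Finset V) :=
  B.powerset.filter (fun C => IsMaxConnComp G B C)

/-- The polynomial `p_A^W(q) = Σ_{A ⊆ B ⊆ W} (−1)^{|B∖A|} ∏_{C ∈ [B]_G} q_C`
in the variables `q`. -/
noncomputable def pPoly (G : SimpleGraph V) (A W : Finset V)
    (q : Finset V → ℝ) : ℝ :=
  ∑ B ∈ Finset.univ.filter (fun B : Finset V => A ⊆ B ∧ B ⊆ W),
    (-1 : ℝ) ^ (B \ A).card * ∏ C ∈ maxConnComps G B, q C

theorem hasDerivAt_prod_update {ι 𝕜 : Type*} [DecidableEq ι] [NontriviallyNormedField 𝕜]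
    (s : Finset ι) (f : ι → 𝕜) (i : ι) :
    HasDerivAt (fun x => ∏ j ∈ s, Function.update f i x j)
      (if i ∈ s then ∏ j ∈ s.erase i, f j else 0) (f i) := by
  split_ifs with hi
  · have h : ∀ x, ∏ j ∈ s, Function.update f i x j = x * ∏ j ∈ s.erase i, f j := fun x => by
      rw [← mul_prod_erase _ _ hi, Function.update_self]
      exact congrArg _ (prod_congr rfl fun j hj => Function.update_of_ne (ne_of_mem_erase hj) _ _)
    simp only [h]
    simpa using (hasDerivAt_id (f i)).mul_const (∏ j ∈ s.erase i, f j)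
  · have h : ∀ x, ∏ j ∈ s, Function.update f i x j = ∏ j ∈ s, f j := fun x =>
      prod_congr rfl fun j hj => Function.update_of_ne (by rintro rfl; exact hi hj) _ _
    simp only [h]
    exact hasDerivAt_const _ _

theorem card_sdiff_eq_add_card_sdiff_sdiff {α : Type*} [DecidableEq α] {A B C : Finset α} (hCB : C ⊆ B) :
    #(B \ A) = #(C \ A) + #((B \ C) \ (A \ C)) := by
  rw [add_comm, ← card_sdiff_add_card_eq_card (sdiff_subset_sdiff hCB le_rfl)]
  congr 2
  ext x
  simp only [mem_sdiff]
  tauto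

theorem pPoly_eq_zero_of_not_subset (G : SimpleGraph V) {A W : Finset V} (h : ¬A ⊆ W)
    (q : Finset V → ℝ) :
    pPoly G A W q = 0 := by
  refine sum_eq_zero fun B hB => absurd ?_ h
  obtain ⟨hAB, hBW⟩ := (mem_filter.1 hB).2
  exact hAB.trans hBW

section Components

variable {G : SimpleGraph V} [DecidableRel G.Adj]

theorem mem_spo {A : Finset V} {x : V} : x ∈ spo G A ↔ x ∈ A ∨ ∃ v ∈ A, G.Adj v x := by
  simp [spo]

theorem subset_spo (A : Finset V) : A ⊆ spo G A := fun _ hx => mem_spo.2 (Or.inl hx)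

theorem Conn.insert_of_mem_spo {C : Finset V} {x : V} (hconn : Conn G C) (hx : x ∈ spo G C) :
    Conn G (insert x C) := by
  rcases mem_spo.1 hx with hxC | ⟨v, hv, hvx⟩
  · rwa [insert_eq_of_mem hxC]
  have to_v : ∀ y ∈ insert x C, ∃ W : G.Walk y v, ∀ z ∈ W.support, z ∈ insert x C := by
    intro y hy
    rcases mem_insert.1 hy with rfl | hyC
    · refine ⟨.cons hvx.symm .nil, fun z hz => ?_⟩
      rcases List.mem_pair.1 (by simpa using hz) with rfl | rfl
      exacts [mem_insert_self _ _, mem_insert_of_mem hv]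
    · obtain ⟨W, hW⟩ := hconn y hyC v hv
      exact ⟨W, fun z hz => mem_insert_of_mem (hW z hz)⟩
  intro a ha b hb
  obtain ⟨Wa, hWa⟩ := to_v a ha
  obtain ⟨Wb, hWb⟩ := to_v b hb
  refine ⟨Wa.append Wb.reverse, fun z hz => ?_⟩
  rcases (SimpleGraph.Walk.mem_support_append_iff _ _).1 hz with hz | hz
  · exact hWa z hz
  · exact hWb z (by simpa using hz)

theorem Conn.subset_of_disjoint_sdiff_spo {B C D : Finset V} (hD : Conn G D) (hDB : D ⊆ B)
    (hC : Disjoint (B \ C) (spo G C)) (hDC : (D ∩ C).Nonempty) : D ⊆ C := by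
  obtain ⟨y, hy⟩ := hDC
  rw [mem_inter] at hy
  intro x hx
  by_contra hxC
  obtain ⟨W, hW⟩ := hD y hy.1 x hx
  obtain ⟨d, hd, hd₁, hd₂⟩ := W.exists_boundary_dart (C : Set V) hy.2 (by simpa using hxC)
  have hd₂B : d.snd ∈ B \ C :=
    mem_sdiff.2 ⟨hDB (hW _ (W.dart_snd_mem_support_of_mem_darts hd)), hd₂⟩
  exact disjoint_left.1 hC hd₂B (mem_spo.2 (Or.inr ⟨d.fst, hd₁, d.adj⟩))

theorem mem_maxConnComps_iff {B D : Finset V} :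
    D ∈ maxConnComps G B ↔ D.Nonempty ∧ Conn G D ∧ D ⊆ B ∧ Disjoint (B \ D) (spo G D) := by
  classical
  rw [maxConnComps, mem_filter, mem_powerset, IsMaxConnComp]
  constructor
  · rintro ⟨-, hDB, hD, hconn, hmax⟩
    refine ⟨hD, hconn, hDB, disjoint_left.2 fun x hx hxD => (mem_sdiff.1 hx).2 ?_⟩
    rw [← hmax _ (subset_insert x D) (insert_subset (mem_sdiff.1 hx).1 hDB)
      (hconn.insert_of_mem_spo hxD)]
    exact mem_insert_self x D
  · rintro ⟨hD, hconn, hDB, hdisj⟩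
    refine ⟨hDB, hDB, hD, hconn, fun C' hDC' hC'B hC' => Subset.antisymm ?_ hDC'⟩
    obtain ⟨v, hv⟩ := hD
    exact hC'.subset_of_disjoint_sdiff_spo hC'B hdisj ⟨v, mem_inter.2 ⟨hDC' hv, hv⟩⟩

theorem maxConnComps_sdiff {B C : Finset V} (hCB : C ∈ maxConnComps G B) :
    maxConnComps G (B \ C) = (maxConnComps G B).erase C := by
  obtain ⟨hC, hCconn, hCsub, hCdisj⟩ := mem_maxConnComps_iff.1 hCB
  ext D
  simp only [mem_erase, mem_maxConnComps_iff]
  constructor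
  · rintro ⟨hD, hconn, hDsub, hdisj⟩
    refine ⟨?_, hD, hconn, hDsub.trans sdiff_subset, disjoint_left.2 fun x hx hxD => ?_⟩
    · rintro rfl
      obtain ⟨v, hv⟩ := hD
      exact (mem_sdiff.1 (hDsub hv)).2 hv
    by_cases hxC : x ∈ C
    · obtain ⟨v, hv, hvx⟩ := (mem_spo.1 hxD).resolve_left (mem_sdiff.1 hx).2
      exact disjoint_left.1 hCdisj (hDsub hv) (mem_spo.2 (Or.inr ⟨x, hxC, hvx.symm⟩))
    · exact disjoint_left.1 hdisj
        (mem_sdiff.2 ⟨mem_sdiff.2 ⟨(mem_sdiff.1 hx).1, hxC⟩, (mem_sdiff.1 hx).2⟩) hxD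
  · rintro ⟨hDC, hD, hconn, hDB, hdisj⟩
    have hDC_disj : Disjoint D C := by
      rw [disjoint_iff_inter_eq_empty, ← not_nonempty_iff_eq_empty]
      intro hinter
      refine hDC (Subset.antisymm (hconn.subset_of_disjoint_sdiff_spo hDB hCdisj hinter)
        (hCconn.subset_of_disjoint_sdiff_spo hCsub hdisj ?_))
      rwa [inter_comm]
    refine ⟨hD, hconn, subset_sdiff.2 ⟨hDB, hDC_disj⟩, ?_⟩
    exact hdisj.mono_left (sdiff_subset_sdiff sdiff_subset le_rfl)

end Components

section Polynomial

variable (G : SimpleGraph V) [DecidableRel G.Adj]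

theorem sum_of_mem_maxConnComps_eq_pPoly {A C W : Finset V} (hC : C.Nonempty)
    (hconn : Conn G C) (hCW : C ⊆ W) (q : Finset V → ℝ) :
    ∑ B ∈ (univ.filter fun B : Finset V => A ⊆ B ∧ B ⊆ W).filter (C ∈ maxConnComps G ·),
        (-1 : ℝ) ^ #(B \ A) * ∏ D ∈ (maxConnComps G B).erase C, q D =
      (-1 : ℝ) ^ #(C \ A) * pPoly G (A \ C) (W \ spo G C) q := by
  have hmem : ∀ {B}, C ∈ maxConnComps G B ↔ C ⊆ B ∧ Disjoint (B \ C) (spo G C) := by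
    simp [mem_maxConnComps_iff, hC, hconn]
  rw [pPoly, mul_sum]
  refine sum_nbij' (· \ C) (· ∪ C) ?_ ?_ ?_ ?_ ?_
  · intro B hB
    simp only [mem_filter, mem_univ, true_and, hmem] at hB ⊢
    obtain ⟨⟨hAB, hBW⟩, -, hdisj⟩ := hB
    exact ⟨sdiff_subset_sdiff hAB le_rfl, subset_sdiff.2 ⟨sdiff_subset.trans hBW, hdisj⟩⟩
  · intro B' hB'
    simp only [mem_filter, mem_univ, true_and, hmem, subset_sdiff] at hB' ⊢
    obtain ⟨hAB', hB'W, hdisj⟩ := hB'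
    refine ⟨⟨?_, union_subset hB'W hCW⟩, subset_union_right, ?_⟩
    · exact sdiff_le_iff'.1 hAB'
    · exact hdisj.mono_left (sdiff_le_iff'.2 le_rfl)
  · intro B hB
    exact sdiff_union_of_subset (hmem.1 (mem_filter.1 hB).2).1
  · intro B' hB'
    have hdisj := (subset_sdiff.1 (mem_filter.1 hB').2.2).2
    exact union_sdiff_cancel_right (hdisj.mono_right (subset_spo C))
  · intro B hB
    have hCB := mem_filter.1 hB
    rw [maxConnComps_sdiff hCB.2, card_sdiff_eq_add_card_sdiff_sdiff (hmem.1 hCB.2).1, pow_add, mul_assoc]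

theorem hasDerivAt_pPoly_update {A C W : Finset V} (hC : C.Nonempty) (hconn : Conn G C)
    (hCW : C ⊆ W) (q : Finset V → ℝ) :
    HasDerivAt (fun s => pPoly G A W (Function.update q C s))
      ((-1 : ℝ) ^ #(C \ A) * pPoly G (A \ C) (W \ spo G C) q) (q C) := by
  have h := HasDerivAt.fun_sum fun B (_ : B ∈ univ.filter fun B : Finset V => A ⊆ B ∧ B ⊆ W) =>
    (hasDerivAt_prod_update (maxConnComps G B) q C).const_mul ((-1 : ℝ) ^ #(B \ A))
  rw [← sum_of_mem_maxConnComps_eq_pPoly G hC hconn hCW, sum_filter]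
  simp only [mul_ite, mul_zero] at h
  exact h

end Polynomial

/-- Lemma (derivative): for a nonempty connected set `C` with
`spo(C) ∩ (A∖C) = ∅`, the partial derivative of `p_A^V` with respect to `q_C` is
`(−1)^{|C∖A|} p_{A∖C}^{V∖spo(C)}`; if `spo(C) ∩ (A∖C) ≠ ∅` it is `0`. -/
theorem stmt14 (G : SimpleGraph V) [DecidableRel G.Adj] (A C : Finset V)
    (hC : C.Nonempty) (hconn : Conn G C) (q : Finset V → ℝ) :
    (spo G C ∩ (A \ C) = ∅ →
      HasDerivAt (fun s : ℝ => pPoly G A Finset.univ (Function.update q C s))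
        ((-1 : ℝ) ^ (C \ A).card * pPoly G (A \ C) (Finset.univ \ spo G C) q)
        (q C)) ∧
    (spo G C ∩ (A \ C) ≠ ∅ →
      HasDerivAt (fun s : ℝ => pPoly G A Finset.univ (Function.update q C s))
        0 (q C)) := by
  have hderiv := hasDerivAt_pPoly_update G (A := A) hC hconn (subset_univ C) q
  refine ⟨fun _ => hderiv, fun hmeet => ?_⟩
  obtain ⟨x, hx⟩ := nonempty_iff_ne_empty.2 hmeet
  have hnot : ¬A \ C ⊆ univ \ spo G C := fun h =>
    (mem_sdiff.1 (h (mem_inter.1 hx).2)).2 (mem_inter.1 hx).1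
  rwa [pPoly_eq_zero_of_not_subset G hnot, mul_zero] at hderiv

end BMMI
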